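/- arXiv:1202.2818 — 2 statements merged into one kernel-verified Lean document; each statement's English description precedes it below -/
import Mathlib

section
/- Let α, β, u, v be integers with min(α,β) ≥ 1, α·u − β·v = 1, 0 < u ≤ β, and 0 ≤ v < α. Then the pairs (α−v, β−u) and (v,u) index defined words, and in the free group on generators a, t the word w(α,β)(a,t) satisfies the factorization w(α,β)(a,t) = w(α−v, β−u)(a,t) · w(v,u)(a,t). -/
/-- substitution a ↦ a, t ↦ a·t (letters: `false` = a, `true` = t) -/
def subT (x : Bool) : List Bool := if x then [false, true] else [false]
/-- substitution a ↦ a·t, t ↦ t -/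
def subA (x : Bool) : List Bool := if x then [true] else [false, true]

/-- The word `w α β` of the paper, defined recursively by `w 1 0 = a`, `w 0 1 = t`,
`w (α+β) β (a,t) = w α β (a, a·t)` and `w α (α+β) (a,t) = w α β (a·t, t)`,
as a positive word in the letters `false` (= a) and `true` (= t). -/
def w : ℕ → ℕ → List Bool
  | 1, 0 => [false]
  | 0, 1 => [true]
  | α + 1, β + 1 =>
      if α > β then (w (α - β) (β + 1)).flatMap subT
      else (w (α + 1) (β - α)).flatMap subA
  | _, _ => []
  termination_by α β => α + β
  decreasing_by all_goals omega


lemma w_succ (α β : ℕ) : w (α+1) (β+1) = if α > β then (w (α - β) (β + 1)).flatMap subT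
      else (w (α + 1) (β - α)).flatMap subA := by rw [w]
lemma w_zero (α : ℕ) (h : α ≠ 1) : w α 0 = [] := by
  match α, h with
  | 0, _ => rw [w] <;> (intros; omega)
  | (n+2), _ => rw [w] <;> (intros; omega)
lemma w_zero' (β : ℕ) (h : β ≠ 1) : w 0 β = [] := by
  match β, h with
  | 0, _ => rw [w] <;> (intros; omega)
  | (n+2), _ => rw [w] <;> (intros; omega)
lemma w_10 : w 1 0 = [false] := by rw [w]
lemma w_01 : w 0 1 = [true] := by rw [w]

lemma subT_w (α β : ℕ) : w (α + β) β = (w α β).flatMap subT := by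
  match α, β with
  | 0, 0 => simp [w_zero]
  | 0, 1 => rw [w_01, w_succ]; simp [subT, subA, w_10]
  | 0, (β+2) =>
    rw [Nat.zero_add, w_succ, if_neg (by omega), Nat.sub_self,
      w_zero _ (by omega), w_zero' _ (by omega)]; simp
  | (α+1), 0 => match α with
    | 0 => rw [w_10]; simp [w_10, subT]
    | (n+1) => rw [show n+1+1+0 = n+2 by omega, w_zero _ (by omega)]; simp
  | (α+1), (β+1) =>
    rw [show α + 1 + (β+1) = (α + β + 1) + 1 by omega, w_succ]
    rw [if_pos (by omega), show α + β + 1 - β = α + 1 by omega]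

lemma subA_w (α β : ℕ) : w α (α + β) = (w α β).flatMap subA := by
  match α, β with
  | 0, 0 => simp [w_zero]
  | 0, 1 => rw [w_01]; simp [subA]
  | 0, (β+2) => rw [Nat.zero_add, w_zero' _ (by omega)]; simp
  | 1, 0 => rw [show (1:ℕ)+0 = 0+1 by omega, w_succ, if_neg (by omega)]
  | (α+2), 0 =>
    rw [show α+2+0 = (α+1)+1 by omega, w_succ, if_neg (by omega), Nat.sub_self,
      w_zero _ (by omega)]
  | (α+1), (β+1) =>
    rw [show α + 1 + (β+1) = (α + β + 1) + 1 by omega, w_succ]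
    rw [if_neg (by omega), show α + β + 1 - α = β + 1 by omega]

set_option maxHeartbeats 1000000 in
lemma key : ∀ n : ℕ, ∀ α β u v : ℕ, α + β = n → α * u = β * v + 1 → 0 < u → u ≤ β →
    v < α → w α β = w (α - v) (β - u) ++ w v u := by
  intro n
  induction n using Nat.strong_induction_on with
  | _ n ih =>
  intro α β u v hn huv hu hu' hv
  have hβ : 1 ≤ β := le_trans hu hu'
  have hα : 1 ≤ α := by omega
  rcases lt_trichotomy α β with h | h | h
  · -- α < β
    have hvu : v < u := by nlinarith
    have h1 : α * (u - v) = (β - α) * v + 1 := by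
      have h2 : α + (β - α) = β := by omega
      have h3 : v + (u - v) = u := by omega
      nlinarith [Nat.sub_add_cancel h.le, Nat.sub_add_cancel hvu.le]
    have h2 : u - v ≤ β - α := by
      by_contra hc
      push_neg at hc
      have hβ2 : 2 ≤ β := by omega
      nlinarith [Nat.sub_add_cancel h.le, Nat.sub_add_cancel hvu.le, hv]
    have IH := ih β (by omega) α (β - α) (u - v) v (by omega) h1 (by omega) h2 hv
    calc w α β = w α (α + (β - α)) := by rw [show α + (β-α) = β by omega]
    _ = (w α (β - α)).flatMap subA := subA_w _ _
    _ = (w (α - v) ((β - α) - (u - v))).flatMap subA ++ (w v (u - v)).flatMap subA := by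
        rw [IH, List.flatMap_append]
    _ = w (α - v) (β - u) ++ w v u := by
        rw [← subA_w (α - v) ((β - α) - (u - v)), ← subA_w v (u - v)]
        rw [show (α - v) + ((β - α) - (u - v)) = β - u by omega,
            show v + (u - v) = u by omega]
  · -- α = β
    have hvu : v < u := by nlinarith
    have h1 : α * (u - v) = 1 := by
      nlinarith [Nat.sub_add_cancel hvu.le]
    have hα1 : α = 1 := by
      have := Nat.le_mul_of_pos_right α (show 0 < u - v by omega)
      omega
    have : β = 1 ∧ u = 1 ∧ v = 0 := by
      constructor; omega
      constructor
      · nlinarith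
      · omega
    obtain ⟨hb, hu1, hv1⟩ := this
    subst hα1 hb hu1 hv1
    rw [show (1:ℕ) - 0 = 0 + 1 by omega, show (1:ℕ) - 1 = 0 by omega]
    rw [show w 1 1 = w (0+1) (0+1) by norm_num, w_succ, if_neg (by omega)]
    rw [w_01, w_10]
    simp [subA]
  · -- α > β
    have huv' : u ≤ v := by nlinarith
    have h1 : (α - β) * u = β * (v - u) + 1 := by
      nlinarith [Nat.sub_add_cancel h.le, Nat.sub_add_cancel huv']
    have h2 : v - u < α - β := by
      by_contra hc
      push_neg at hc
      have e1 : (α - β) * u ≤ (v - u) * β := Nat.mul_le_mul hc hu'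
      have e2 : β * (v - u) = (v - u) * β := Nat.mul_comm _ _
      linarith [h1, e1, e2]
    have IH := ih α (by omega) (α - β) β u (v - u) (by omega) h1 hu hu' h2
    calc w α β = w ((α - β) + β) β := by rw [show (α - β) + β = α by omega]
    _ = (w (α - β) β).flatMap subT := subT_w _ _
    _ = (w ((α - β) - (v - u)) (β - u)).flatMap subT ++ (w (v - u) u).flatMap subT := by
        rw [IH, List.flatMap_append]
    _ = w (α - v) (β - u) ++ w v u := by
        rw [← subT_w ((α - β) - (v - u)) (β - u), ← subT_w (v - u) u]
        rw [show ((α - β) - (v - u)) + (β - u) = α - v by omega,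
            show (v - u) + u = v by omega]

/-- With `α·u − β·v = 1`, `0 < u ≤ β`, `0 ≤ v < α` (and `α, β ≥ 1`), the word `w α β`
factors as `w (α−v) (β−u) · w v u`. -/
theorem stmt_4 (α β u v : ℕ) (huv : α * u = β * v + 1) (hu : 0 < u) (hu' : u ≤ β)
    (hv : v < α) :
    w α β = w (α - v) (β - u) ++ w v u :=
  key (α + β) α β u v rfl huv hu hu' hv
end

section
/- Let α, β, u, v be integers with α·u − β·v = 1, 0 < u ≤ β, and 0 ≤ v < α, with α, β ≥ 1. Then in the free group on generators a, t: w(α,β)(a,t) = (w(v,u)(a,t)·t^{-1}) · a·t · (a^{-1}·w(α−v, β−u)(a,t)). In other words, the word obtained from w(α,β)(a,t) by the cyclic permutation moving the final block w(v,u) to the front, followed by replacing the resulting subword t·a (at the junction) by a·t, equals w(α,β)(a,t) again. -/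
/-- Interpretation of a positive word as an element of the free group on the two
generators `false` (= a) and `true` (= t). -/
def toF (l : List Bool) : FreeGroup Bool := (l.map FreeGroup.of).prod


/-!
Write `α = v + α'` and `β = u + β'`. Then `α' u - β' v = 1`, so `(v, u)` and `(α', β')` are
neighbours in the Stern–Brocot tree and `(α, β)` is their mediant; the claim becomes
`w (v + α') (u + β') = w v u · ⁅t⁻¹, a⁆ · w α' β'`. This is proved by descending the tree: the
two substitutions defining `w` both fix the commutator `⁅t⁻¹, a⁆ = t⁻¹ a t a⁻¹`, and the only
neighbours whose mediant lies on the diagonal are `(0, 1)` and `(1, 0)`, where the identity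
reads `a t = t · t⁻¹ a t a⁻¹ · a`.
-/

open FreeGroup
open scoped commutatorElement

lemma w_self (n : ℕ) : w (n + 2) (n + 2) = [] := by
  rw [w, if_neg (by omega), Nat.sub_self]
  simp [w]

lemma w_add_left (x y : ℕ) : w (x + y) y = (w x y).flatMap subT := by
  rcases x with _ | x <;> rcases y with _ | y
  · simp [w]
  · rcases y with _ | y
    · simp [w, subA, subT]
    · simp [w_self, w]
  · rcases x with _ | x <;> simp [w, subT]
  · rw [show x + 1 + (y + 1) = (x + y + 1) + 1 by omega, w, if_pos (by omega),
      show x + y + 1 - y = x + 1 by omega]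

lemma w_add_right (x y : ℕ) : w x (x + y) = (w x y).flatMap subA := by
  rcases x with _ | x <;> rcases y with _ | y
  · simp [w]
  · rcases y with _ | y <;> simp [w, subA]
  · rcases x with _ | x
    · simp [w, subA]
    · simp [w_self, w]
  · rw [show x + 1 + (y + 1) = (x + y + 1) + 1 by omega, w, if_neg (by omega),
      show x + y + 1 - x = y + 1 by omega]

lemma toF_cons (x : Bool) (l : List Bool) : toF (x :: l) = of x * toF l := List.prod_cons

lemma toF_append (l₁ l₂ : List Bool) : toF (l₁ ++ l₂) = toF l₁ * toF l₂ := by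
  simp [toF]

lemma toF_flatMap (f : Bool → List Bool) (l : List Bool) :
    toF (l.flatMap f) = lift (toF ∘ f) (toF l) := by
  induction l with
  | nil => rfl
  | cons x l ih =>
    rw [List.flatMap_cons, toF_append, ih, toF_cons, MonoidHom.map_mul, lift_apply_of]
    rfl

lemma lift_subT_commutator :
    lift (toF ∘ subT) ⁅(of true)⁻¹, of false⁆ = ⁅(of true)⁻¹, of false⁆ := by
  decide

lemma lift_subA_commutator :
    lift (toF ∘ subA) ⁅(of true)⁻¹, of false⁆ = ⁅(of true)⁻¹, of false⁆ := by
  decide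

namespace Unimodular

variable {v u α β : ℕ}

lemma le_and_le_of_add_lt (h : α * u = β * v + 1) (hlt : v + α < u + β) : v ≤ u ∧ α ≤ β := by
  constructor <;> nlinarith

lemma le_and_le_of_lt_add (h : α * u = β * v + 1) (hgt : u + β < v + α) : u ≤ v ∧ β ≤ α := by
  constructor <;> nlinarith

lemma eq_of_add_eq (h : α * u = β * v + 1) (heq : v + α = u + β) :
    v = 0 ∧ u = 1 ∧ α = 1 ∧ β = 0 := by
  have hn : ((v + α : ℕ) : ℤ) * (u - v) = 1 := by
    push_cast; zify at h heq
    linear_combination h - (v : ℤ) * heq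
  have hn1 := Int.eq_one_of_mul_eq_one_right (by positivity) hn
  rw [hn1, one_mul] at hn
  omega

end Unimodular

theorem toF_w_mediant {v u α β : ℕ} (h : α * u = β * v + 1) :
    toF (w (v + α) (u + β)) = toF (w v u) * ⁅(of true)⁻¹, of false⁆ * toF (w α β) := by
  -- these make the recursive calls decrease
  obtain ⟨hα, hu⟩ : 0 < α ∧ 0 < u := CanonicallyOrderedAdd.mul_pos.mp (by omega)
  rcases lt_trichotomy (v + α) (u + β) with hlt | heq | hgt
  · obtain ⟨hvu, hαβ⟩ := Unimodular.le_and_le_of_add_lt h hlt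
    obtain ⟨u', rfl⟩ := Nat.exists_eq_add_of_le hvu
    obtain ⟨β', rfl⟩ := Nat.exists_eq_add_of_le hαβ
    have h' : α * u' = β' * v + 1 := by linarith
    rw [show v + u' + (α + β') = v + α + (u' + β') by ring, w_add_right, toF_flatMap,
      toF_w_mediant h', MonoidHom.map_mul, MonoidHom.map_mul, lift_subA_commutator,
      ← toF_flatMap, ← toF_flatMap, ← w_add_right, ← w_add_right]
  · obtain ⟨rfl, rfl, rfl, rfl⟩ := Unimodular.eq_of_add_eq h heq
    rw [show w (0 + 1) (1 + 0) = [false, true] by simp [w, subA], show w 0 1 = [true] by simp [w],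
      show w 1 0 = [false] by simp [w]]
    decide
  · obtain ⟨huv, hβα⟩ := Unimodular.le_and_le_of_lt_add h hgt
    obtain ⟨v', rfl⟩ := Nat.exists_eq_add_of_le' huv
    obtain ⟨α', rfl⟩ := Nat.exists_eq_add_of_le' hβα
    have h' : α' * u = β * v' + 1 := by linarith
    rw [show v' + u + (α' + β) = v' + α' + (u + β) by ring, w_add_left, toF_flatMap,
      toF_w_mediant h', MonoidHom.map_mul, MonoidHom.map_mul, lift_subT_commutator,
      ← toF_flatMap, ← toF_flatMap, ← w_add_left, ← w_add_left]
termination_by v + u + α + β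

theorem stmt_5_general (α β u v : ℕ) (huv : α * u = β * v + 1) (hu' : u ≤ β)
    (hv : v < α) :
    toF (w α β) =
      (toF (w v u) * (FreeGroup.of true)⁻¹) * (FreeGroup.of false * FreeGroup.of true) *
        ((FreeGroup.of false)⁻¹ * toF (w (α - v) (β - u))) := by
  obtain ⟨α', rfl⟩ := Nat.exists_eq_add_of_le hv.le
  obtain ⟨β', rfl⟩ := Nat.exists_eq_add_of_le hu'
  have hdet : α' * u = β' * v + 1 := by linarith
  rw [toF_w_mediant hdet, Nat.add_sub_cancel_left, Nat.add_sub_cancel_left,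
    commutatorElement_def]
  group

/-- In the free group `F(a,t)`, with `α·u − β·v = 1`, `0 < u ≤ β`, `0 ≤ v < α`,
`α, β ≥ 1`, one has `w α β = (w v u · t⁻¹) · a·t · (a⁻¹ · w (α−v) (β−u))`. -/
theorem stmt_5 (α β u v : ℕ) (huv : α * u = β * v + 1) (hu : 0 < u) (hu' : u ≤ β)
    (hv : v < α) (hα : 1 ≤ α) (hβ : 1 ≤ β) :
    toF (w α β) =
      (toF (w v u) * (FreeGroup.of true)⁻¹) * (FreeGroup.of false * FreeGroup.of true) *
        ((FreeGroup.of false)⁻¹ * toF (w (α - v) (β - u))) :=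
  stmt_5_general α β u v huv hu' hv
end
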